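/- arXiv:2211.05491 — 2 statements merged into one kernel-verified Lean document; each statement's English description precedes it below -/
import Mathlib

section
/- Let H, R be finite-dimensional complex Hilbert spaces, B = ℂ², |ψ⟩ a unit vector in H⊗B⊗R, and γ, ε ∈ [0,1]. If there exists a (γ,ε)-radiation decoder against |ψ⟩, then there exists a (γ,ε)-superdense decoder against |ψ⟩. -/
open Matrix BigOperators
open scoped ComplexOrder

noncomputable section

namespace BHRD

/-- A (qu)bit index. -/
abbrev Bit := ZMod 2

/-- The Pauli `X` matrix. -/
def Xm : Matrix Bit Bit ℂ := Matrix.of fun i j => if i = j + 1 then 1 else 0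

/-- The Pauli `Z` matrix. -/
def Zm : Matrix Bit Bit ℂ := Matrix.of fun i j => if i = j then (if j = 1 then -1 else 1) else 0

/-- The Pauli mask `X^x Z^z`. -/
def pauli (x z : Bit) : Matrix Bit Bit ℂ := Xm ^ x.val * Zm ^ z.val

/-- The EPR vector `(|00⟩+|11⟩)/√2`. -/
def epr : Bit × Bit → ℂ := fun p => if p.1 = p.2 then (((Real.sqrt 2 : ℝ) : ℂ))⁻¹ else 0

variable {dH dR : ℕ}

/-- The reduced density matrix of `|ψ⟩ ∈ H ⊗ B ⊗ R` on `B ⊗ R`, i.e. `Tr_H |ψ⟩⟨ψ|`. -/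
def rhoBR (ψ : Fin dH × Bit × Fin dR → ℂ) :
    Matrix (Bit × Fin dR) (Bit × Fin dR) ℂ :=
  Matrix.of fun p q => ∑ h : Fin dH, ψ (h, p) * (starRingEnd ℂ) (ψ (h, q))

/-- `(X^x Z^z) ⊗ I_R` acting on `B ⊗ R`. -/
def maskB (dR : ℕ) (x z : Bit) : Matrix (Bit × Fin dR) (Bit × Fin dR) ℂ :=
  Matrix.of fun p q => if p.2 = q.2 then pauli x z p.1 q.1 else 0

/-- The masked state `ρ^{xz} = (X^x Z^z ⊗ I) Tr_H|ψ⟩⟨ψ| (X^x Z^z ⊗ I)†`. -/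
def rhoXZ (ψ : Fin dH × Bit × Fin dR → ℂ) (x z : Bit) :
    Matrix (Bit × Fin dR) (Bit × Fin dR) ℂ :=
  maskB dR x z * rhoBR ψ * (maskB dR x z)ᴴ

/-- `K` is a family of Kraus operators for a (trace-preserving) quantum channel. -/
def IsKraus {α β : Type*} [Fintype α] [Fintype β] [DecidableEq β] {k : ℕ}
    (K : Fin k → Matrix α β ℂ) : Prop :=
  ∑ i, (K i)ᴴ * K i = 1

/-- Application of the channel with Kraus operators `K` to a state `ρ`. -/
def applyCh {α β : Type*} [Fintype α] [Fintype β] {k : ℕ}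
    (K : Fin k → Matrix α β ℂ) (ρ : Matrix β β ℂ) : Matrix α α ℂ :=
  ∑ i, K i * ρ * (K i)ᴴ

/-- The extension `id_B ⊗ A` of a channel `A : R → D ⊗ F` given by a Kraus operator `K`:
a Kraus operator from `B ⊗ R` to `B ⊗ D ⊗ F`. -/
def extB (K : Matrix (Bit × Bit) (Fin dR) ℂ) :
    Matrix (Bit × Bit × Bit) (Bit × Fin dR) ℂ :=
  Matrix.of fun p q => if p.1 = q.1 then K p.2 q.2 else 0

/-- The projector `I_{B⊗D} ⊗ |0⟩⟨0|_F` on `B ⊗ D ⊗ F`. -/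
def PF0 : Matrix (Bit × Bit × Bit) (Bit × Bit × Bit) ℂ :=
  Matrix.of fun p q =>
    if p.1 = q.1 ∧ p.2.1 = q.2.1 ∧ p.2.2 = 0 ∧ q.2.2 = 0 then 1 else 0

/-- The projector `|epr⟩⟨epr|_{B⊗D} ⊗ |0⟩⟨0|_F` on `B ⊗ D ⊗ F`. -/
def Pepr0 : Matrix (Bit × Bit × Bit) (Bit × Bit × Bit) ℂ :=
  Matrix.of fun p q =>
    (if p.2.2 = 0 ∧ q.2.2 = 0 then 1 else 0) *
      (epr (p.1, p.2.1) * (starRingEnd ℂ) (epr (q.1, q.2.1)))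

/-- `K` is (the Kraus family of) a `(γ,ε)`-radiation decoder against `ψ`. -/
def IsRadDecoder (ψ : Fin dH × Bit × Fin dR → ℂ) (γ ε : ℝ) {k : ℕ}
    (K : Fin k → Matrix (Bit × Bit) (Fin dR) ℂ) : Prop :=
  IsKraus K ∧
  γ ≤ ((PF0 * applyCh (fun i => extB (K i)) (rhoBR ψ)).trace).re ∧
  ((PF0 * applyCh (fun i => extB (K i)) (rhoBR ψ)).trace).re * (1/4 + (3/4) * ε) ≤
    ((Pepr0 * applyCh (fun i => extB (K i)) (rhoBR ψ)).trace).re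

/-- The projector `I_P ⊗ |0⟩⟨0|_F` on `P ⊗ F`. -/
def QF0 : Matrix ((Bit × Bit) × Bit) ((Bit × Bit) × Bit) ℂ :=
  Matrix.of fun p q => if p.1 = q.1 ∧ p.2 = 0 ∧ q.2 = 0 then 1 else 0

/-- The projector `|x,z⟩⟨x,z|_P ⊗ |0⟩⟨0|_F` on `P ⊗ F`. -/
def Qxz0 (x z : Bit) : Matrix ((Bit × Bit) × Bit) ((Bit × Bit) × Bit) ℂ :=
  Matrix.of fun p q => if p = ((x, z), 0) ∧ q = ((x, z), 0) then 1 else 0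

/-- `K` is (the Kraus family of) a `(γ,ε)`-superdense decoder against `ψ`. -/
def IsSupDecoder (ψ : Fin dH × Bit × Fin dR → ℂ) (γ ε : ℝ) {k : ℕ}
    (K : Fin k → Matrix ((Bit × Bit) × Bit) (Bit × Fin dR) ℂ) : Prop :=
  IsKraus K ∧
  γ ≤ (1/4) * ∑ x : Bit, ∑ z : Bit, ((QF0 * applyCh K (rhoXZ ψ x z)).trace).re ∧
  ((1/4) * ∑ x : Bit, ∑ z : Bit, ((QF0 * applyCh K (rhoXZ ψ x z)).trace).re) *
      (1/4 + (3/4) * ε) ≤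
    (1/4) * ∑ x : Bit, ∑ z : Bit, ((Qxz0 x z * applyCh K (rhoXZ ψ x z)).trace).re

end BHRD

/-!
The superdense decoder applies the radiation decoder `A` to `R` and then measures `B ⊗ D` in the
Bell basis `|bell_{xz}⟩ = (X^x Z^z ⊗ I)|epr⟩`, reporting the outcome `(x, z)` and keeping the flag
`F`. The Bell projectors sum to the identity, and the Pauli mask on `B` commutes with `id_B ⊗ A`
and leaves the flag untouched, so on every `ρ^{xz}` the flag is `0` with probability exactly `γ'`.
Since `(X^x Z^z ⊗ I)† |bell_{xz}⟩ = |epr⟩`, the probability of outcome `(x, z)` with flag `0` on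
`ρ^{xz}` is exactly the EPR term of `A`. So both defining inequalities carry over unchanged.
-/

namespace BHRD

open scoped Kronecker

variable {dH dR : ℕ}

section KrausChannels

variable {α β γ ι : Type*} [Fintype β] [Fintype ι]

def krausComp (U : ι → Matrix α β ℂ) {k : ℕ} (K : Fin k → Matrix β γ ℂ) :
    Fin (Fintype.card (Fin k × ι)) → Matrix α γ ℂ :=
  fun n => U ((Fintype.equivFin _).symm n).2 * K ((Fintype.equivFin _).symm n).1

lemma sum_krausComp {M : Type*} [AddCommMonoid M] (U : ι → Matrix α β ℂ) {k : ℕ}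
    (K : Fin k → Matrix β γ ℂ) (f : Matrix α γ ℂ → M) :
    ∑ n, f (krausComp U K n) = ∑ j, ∑ i, f (U j * K i) := by
  rw [Finset.sum_comm, ← Fintype.sum_prod_type']
  exact (Fintype.equivFin _).symm.sum_comp fun t : Fin k × ι => f (U t.2 * K t.1)

variable [Fintype α] [Fintype γ]

lemma trace_mul_conj (Q : Matrix α α ℂ) (A : Matrix α β ℂ) (Y : Matrix β β ℂ) :
    (Q * (A * Y * Aᴴ)).trace = (Aᴴ * Q * A * Y).trace := by
  rw [← Matrix.mul_assoc, trace_mul_comm]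
  simp only [Matrix.mul_assoc]

lemma trace_mul_sum_conj (Q : Matrix α α ℂ) (U : ι → Matrix α β ℂ)
    (Y : Matrix β β ℂ) :
    (Q * ∑ j, U j * Y * (U j)ᴴ).trace = ((∑ j, (U j)ᴴ * Q * U j) * Y).trace := by
  simp only [Matrix.mul_sum, Matrix.sum_mul, trace_sum, trace_mul_conj]

lemma applyCh_conj {k : ℕ} (K : Fin k → Matrix α β ℂ) (M : Matrix β γ ℂ)
    (ρ : Matrix γ γ ℂ) :
    applyCh K (M * ρ * Mᴴ) = applyCh (fun i => K i * M) ρ := by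
  simp only [applyCh, conjTranspose_mul, Matrix.mul_assoc]

lemma applyCh_mul_left {k : ℕ} (M : Matrix α β ℂ) (K : Fin k → Matrix β γ ℂ)
    (ρ : Matrix γ γ ℂ) :
    applyCh (fun i => M * K i) ρ = M * applyCh K ρ * Mᴴ := by
  simp only [applyCh, Matrix.mul_sum, Matrix.sum_mul, conjTranspose_mul, Matrix.mul_assoc]

lemma applyCh_krausComp (U : ι → Matrix α β ℂ) {k : ℕ} (K : Fin k → Matrix β γ ℂ)
    (ρ : Matrix γ γ ℂ) :
    applyCh (krausComp U K) ρ = ∑ j, U j * applyCh K ρ * (U j)ᴴ := by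
  simp only [← applyCh_mul_left]
  exact sum_krausComp U K fun A => A * ρ * Aᴴ

lemma IsKraus.krausComp [DecidableEq β] [DecidableEq γ] {U : ι → Matrix α β ℂ} {k : ℕ}
    {K : Fin k → Matrix β γ ℂ} (hK : IsKraus K) (hU : ∑ j, (U j)ᴴ * U j = 1) :
    IsKraus (krausComp U K) := by
  unfold IsKraus
  rw [sum_krausComp U K fun A => Aᴴ * A, Finset.sum_comm, ← hK]
  refine Finset.sum_congr rfl fun i _ => ?_
  have sandwich (j : ι) : (U j * K i)ᴴ * (U j * K i) = (K i)ᴴ * ((U j)ᴴ * U j) * K i := by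
    simp only [conjTranspose_mul, Matrix.mul_assoc]
  simp only [sandwich, ← Matrix.mul_sum, ← Matrix.sum_mul, hU, Matrix.mul_one]

lemma conjTranspose_mul_vecMulVec_star_mul {m n : Type*} [Fintype m] (A : Matrix m n ℂ)
    (v : m → ℂ) :
    Aᴴ * vecMulVec v (star v) * A = vecMulVec (Aᴴ *ᵥ v) (star (Aᴴ *ᵥ v)) := by
  rw [mul_vecMulVec, vecMulVec_mul, star_mulVec, conjTranspose_conjTranspose]

end KrausChannels

lemma sum_bit {M : Type*} [AddCommMonoid M] (f : Bit → M) : ∑ x, f x = f 0 + f 1 :=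
  Fin.sum_univ_two f

lemma bit_eq_zero_or_eq_one : ∀ a : Bit, a = 0 ∨ a = 1 := by decide

lemma bit_one_add_one : (1 : Bit) + 1 = 0 := rfl

lemma Xm_mem_unitaryGroup : Xm ∈ unitaryGroup Bit ℂ := by
  rw [mem_unitaryGroup_iff, star_eq_conjTranspose]
  ext i j
  simp only [mul_apply, sum_bit, conjTranspose_apply, Xm, of_apply, one_apply]
  rcases bit_eq_zero_or_eq_one i with rfl | rfl <;>
    rcases bit_eq_zero_or_eq_one j with rfl | rfl <;>
    simp [bit_one_add_one]

lemma Zm_mem_unitaryGroup : Zm ∈ unitaryGroup Bit ℂ := by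
  rw [mem_unitaryGroup_iff, star_eq_conjTranspose]
  ext i j
  simp only [mul_apply, sum_bit, conjTranspose_apply, Zm, of_apply, one_apply]
  rcases bit_eq_zero_or_eq_one i with rfl | rfl <;>
    rcases bit_eq_zero_or_eq_one j with rfl | rfl <;>
    simp

lemma pauli_mem_unitaryGroup (x z : Bit) : pauli x z ∈ unitaryGroup Bit ℂ :=
  mul_mem (pow_mem Xm_mem_unitaryGroup _) (pow_mem Zm_mem_unitaryGroup _)

lemma conjTranspose_pauli_mul_self (x z : Bit) : (pauli x z)ᴴ * pauli x z = 1 :=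
  mem_unitaryGroup_iff'.mp (pauli_mem_unitaryGroup x z)

lemma sum_pauli_mul_star_pauli (a b a' b' : Bit) :
    ∑ x : Bit, ∑ z : Bit, pauli x z a b * star (pauli x z a' b') =
      if (a, b) = (a', b') then 2 else 0 := by
  simp only [sum_bit, pauli, Xm, Zm, mul_apply, pow_one, pow_zero, ZMod.val_zero,
    ZMod.val_one, one_apply, of_apply, bit_one_add_one]
  rcases bit_eq_zero_or_eq_one a with rfl | rfl <;>
    rcases bit_eq_zero_or_eq_one b with rfl | rfl <;>
    rcases bit_eq_zero_or_eq_one a' with rfl | rfl <;>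
    rcases bit_eq_zero_or_eq_one b' with rfl | rfl <;>
    simp <;> norm_num


lemma extB_eq_kronecker (A : Matrix (Bit × Bit) (Fin dR) ℂ) : extB A = 1 ⊗ₖ A := by
  ext p q
  simp [extB, one_apply]

lemma maskB_eq_kronecker (x z : Bit) : maskB dR x z = pauli x z ⊗ₖ 1 := by
  ext p q
  simp [maskB, one_apply]

lemma IsKraus.extB {k : ℕ} {K : Fin k → Matrix (Bit × Bit) (Fin dR) ℂ} (hK : IsKraus K) :
    IsKraus fun i => extB (K i) := by
  unfold IsKraus at hK ⊢
  simp only [extB_eq_kronecker, conjTranspose_kronecker, ← mul_kronecker_mul, conjTranspose_one,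
    Matrix.one_mul]
  rw [← one_kronecker_one, ← hK]
  ext p q
  simp [Matrix.sum_apply, Finset.mul_sum]

def pauliB (x z : Bit) : Matrix (Bit × Bit × Bit) (Bit × Bit × Bit) ℂ :=
  pauli x z ⊗ₖ 1

lemma conjTranspose_pauliB_mul_self (x z : Bit) : (pauliB x z)ᴴ * pauliB x z = 1 := by
  rw [pauliB, conjTranspose_kronecker, ← mul_kronecker_mul, conjTranspose_pauli_mul_self,
    conjTranspose_one, Matrix.one_mul, one_kronecker_one]

lemma extB_mul_maskB (A : Matrix (Bit × Bit) (Fin dR) ℂ) (x z : Bit) :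
    extB A * maskB dR x z = pauliB x z * extB A := by
  rw [extB_eq_kronecker, maskB_eq_kronecker, pauliB, ← mul_kronecker_mul, ← mul_kronecker_mul,
    Matrix.one_mul, Matrix.mul_one, Matrix.one_mul, Matrix.mul_one]

lemma applyCh_extB_rhoXZ {k : ℕ} (ψ : Fin dH × Bit × Fin dR → ℂ)
    (K : Fin k → Matrix (Bit × Bit) (Fin dR) ℂ) (x z : Bit) :
    applyCh (fun i => extB (K i)) (rhoXZ ψ x z) =
      pauliB x z * applyCh (fun i => extB (K i)) (rhoBR ψ) * (pauliB x z)ᴴ := by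
  rw [rhoXZ, applyCh_conj, ← applyCh_mul_left]
  simp only [extB_mul_maskB]

lemma PF0_eq_kronecker :
    PF0 = (1 : Matrix Bit Bit ℂ) ⊗ₖ
      Matrix.of fun r s : Bit × Bit => if r.1 = s.1 ∧ r.2 = 0 ∧ s.2 = 0 then 1 else 0 := by
  ext p q
  simp only [PF0, kroneckerMap_apply, of_apply, one_apply]
  split_ifs <;> simp_all

lemma conjTranspose_pauliB_mul_PF0_mul (x z : Bit) : (pauliB x z)ᴴ * PF0 * pauliB x z = PF0 := by
  rw [PF0_eq_kronecker, pauliB, conjTranspose_kronecker, ← mul_kronecker_mul,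
    ← mul_kronecker_mul, Matrix.mul_one, conjTranspose_pauli_mul_self, conjTranspose_one,
    Matrix.one_mul, Matrix.mul_one]

def eprZero : Bit × Bit × Bit → ℂ := fun p => if p.2.2 = 0 then epr (p.1, p.2.1) else 0

/-- The Bell vector `(X^x Z^z ⊗ I)|epr⟩` for `j = (x, z)`. -/
def bell (j : Bit × Bit) (p : Bit × Bit) : ℂ :=
  pauli j.1 j.2 p.1 p.2 * ((Real.sqrt 2 : ℝ) : ℂ)⁻¹

lemma pauliB_mulVec_eprZero (x z : Bit) :
    pauliB x z *ᵥ eprZero = fun p => if p.2.2 = 0 then bell (x, z) (p.1, p.2.1) else 0 := by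
  ext ⟨a, d, f⟩
  by_cases hf : f = 0 <;>
    simp [hf, pauliB, mulVec, dotProduct, Fintype.sum_prod_type, eprZero, epr, bell, one_apply,
      Prod.ext_iff, eq_comm]

lemma Pepr0_eq_vecMulVec : Pepr0 = vecMulVec eprZero (star eprZero) := by
  ext ⟨a, d, f⟩ ⟨a', d', f'⟩
  by_cases hf : f = 0 <;> by_cases hf' : f' = 0 <;> simp [hf, hf', Pepr0, eprZero, vecMulVec_apply]

def bellProj (x z : Bit) : Matrix (Bit × Bit × Bit) (Bit × Bit × Bit) ℂ :=
  vecMulVec (pauliB x z *ᵥ eprZero) (star (pauliB x z *ᵥ eprZero))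

lemma conjTranspose_pauliB_mul_bellProj_mul (x z : Bit) :
    (pauliB x z)ᴴ * bellProj x z * pauliB x z = Pepr0 := by
  rw [bellProj, conjTranspose_mul_vecMulVec_star_mul, mulVec_mulVec,
    conjTranspose_pauliB_mul_self, one_mulVec, Pepr0_eq_vecMulVec]

lemma sum_bell_mul_star_bell (p q : Bit × Bit) :
    ∑ j, bell j p * star (bell j q) = if p = q then 1 else 0 := by
  have hnorm : ((Real.sqrt 2 : ℝ) : ℂ)⁻¹ * star ((Real.sqrt 2 : ℝ) : ℂ)⁻¹ = 1 / 2 := by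
    rw [star_inv₀, Complex.star_def, Complex.conj_ofReal, ← mul_inv, ← Complex.ofReal_mul,
      Real.mul_self_sqrt zero_le_two]
    norm_num
  simp only [bell, Fintype.sum_prod_type, star_mul', mul_mul_mul_comm _ (_ : ℂ)⁻¹,
    ← Finset.sum_mul, sum_pauli_mul_star_pauli, hnorm]
  split_ifs <;> norm_num

/-- The Kraus operator `|x,z⟩⟨bell_{xz}|_{BD} ⊗ I_F` of the Bell measurement, `j = (x, z)`. -/
def bellMeas (j : Bit × Bit) : Matrix ((Bit × Bit) × Bit) (Bit × Bit × Bit) ℂ :=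
  of fun p q => if p = (j, q.2.2) then star (bell j (q.1, q.2.1)) else 0

lemma conjTranspose_bellMeas_mul_mul (Q : Matrix ((Bit × Bit) × Bit) ((Bit × Bit) × Bit) ℂ)
    (j : Bit × Bit) :
    (bellMeas j)ᴴ * Q * bellMeas j = of fun q q' =>
      Q (j, q.2.2) (j, q'.2.2) * (bell j (q.1, q.2.1) * star (bell j (q'.1, q'.2.1))) := by
  ext q q'
  simp only [mul_apply, conjTranspose_apply, bellMeas, of_apply, apply_ite star, star_star,
    star_zero, ite_mul, zero_mul, mul_ite, mul_zero, Finset.sum_ite_eq', Finset.mem_univ, if_true]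
  ring

lemma sum_conjTranspose_bellMeas_mul_mul
    (Q : Matrix ((Bit × Bit) × Bit) ((Bit × Bit) × Bit) ℂ) (c : Matrix Bit Bit ℂ)
    (hQ : ∀ j f f', Q (j, f) (j, f') = c f f') :
    ∑ j, (bellMeas j)ᴴ * Q * bellMeas j =
      of fun q q' => if (q.1, q.2.1) = (q'.1, q'.2.1) then c q.2.2 q'.2.2 else 0 := by
  ext q q'
  simp only [conjTranspose_bellMeas_mul_mul, Matrix.sum_apply, of_apply, hQ, ← Finset.mul_sum,
    sum_bell_mul_star_bell, mul_ite, mul_one, mul_zero]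

lemma sum_conjTranspose_bellMeas_mul_self : ∑ j, (bellMeas j)ᴴ * bellMeas j = 1 := by
  have hsum := sum_conjTranspose_bellMeas_mul_mul 1 1 fun j f f' => by simp [one_apply]
  simp only [Matrix.mul_one] at hsum
  rw [hsum]
  ext ⟨a, d, f⟩ ⟨a', d', f'⟩
  simp [one_apply, ite_and]

lemma sum_conjTranspose_bellMeas_mul_QF0_mul : ∑ j, (bellMeas j)ᴴ * QF0 * bellMeas j = PF0 := by
  rw [sum_conjTranspose_bellMeas_mul_mul QF0 (of fun f f' => if f = 0 ∧ f' = 0 then 1 else 0)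
    fun j f f' => by simp [QF0]]
  ext ⟨a, d, f⟩ ⟨a', d', f'⟩
  simp [PF0, ite_and]

lemma sum_conjTranspose_bellMeas_mul_Qxz0_mul (x z : Bit) :
    ∑ j, (bellMeas j)ᴴ * Qxz0 x z * bellMeas j = bellProj x z := by
  ext ⟨a, d, f⟩ ⟨a', d', f'⟩
  rw [Matrix.sum_apply, Fintype.sum_eq_single (x, z) fun j hj => by
    simp [conjTranspose_bellMeas_mul_mul, Qxz0, hj]]
  by_cases hf : f = 0 <;> by_cases hf' : f' = 0 <;>
    simp [hf, hf', conjTranspose_bellMeas_mul_mul, Qxz0, bellProj, pauliB_mulVec_eprZero,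
      vecMulVec_apply]

def superdenseOfRad {k : ℕ} (K : Fin k → Matrix (Bit × Bit) (Fin dR) ℂ) :
    Fin (Fintype.card (Fin k × Bit × Bit)) → Matrix ((Bit × Bit) × Bit) (Bit × Fin dR) ℂ :=
  krausComp bellMeas fun i => extB (K i)

lemma trace_mul_applyCh_superdenseOfRad {k : ℕ} (ψ : Fin dH × Bit × Fin dR → ℂ)
    (K : Fin k → Matrix (Bit × Bit) (Fin dR) ℂ)
    (Q : Matrix ((Bit × Bit) × Bit) ((Bit × Bit) × Bit) ℂ) (x z : Bit) :
    (Q * applyCh (superdenseOfRad K) (rhoXZ ψ x z)).trace =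
      ((pauliB x z)ᴴ * (∑ j, (bellMeas j)ᴴ * Q * bellMeas j) * pauliB x z *
        applyCh (fun i => extB (K i)) (rhoBR ψ)).trace := by
  rw [superdenseOfRad, applyCh_krausComp, trace_mul_sum_conj, applyCh_extB_rhoXZ,
    trace_mul_conj]

lemma trace_QF0_mul_applyCh_superdenseOfRad {k : ℕ} (ψ : Fin dH × Bit × Fin dR → ℂ)
    (K : Fin k → Matrix (Bit × Bit) (Fin dR) ℂ) (x z : Bit) :
    (QF0 * applyCh (superdenseOfRad K) (rhoXZ ψ x z)).trace =
      (PF0 * applyCh (fun i => extB (K i)) (rhoBR ψ)).trace := by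
  rw [trace_mul_applyCh_superdenseOfRad, sum_conjTranspose_bellMeas_mul_QF0_mul,
    conjTranspose_pauliB_mul_PF0_mul]

lemma trace_Qxz0_mul_applyCh_superdenseOfRad {k : ℕ} (ψ : Fin dH × Bit × Fin dR → ℂ)
    (K : Fin k → Matrix (Bit × Bit) (Fin dR) ℂ) (x z : Bit) :
    (Qxz0 x z * applyCh (superdenseOfRad K) (rhoXZ ψ x z)).trace =
      (Pepr0 * applyCh (fun i => extB (K i)) (rhoBR ψ)).trace := by
  rw [trace_mul_applyCh_superdenseOfRad, sum_conjTranspose_bellMeas_mul_Qxz0_mul,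
    conjTranspose_pauliB_mul_bellProj_mul]

theorem rad_decoder_implies_superdense_decoder_general
    (dH dR : ℕ)
    (ψ : Fin dH × Bit × Fin dR → ℂ)
    (γ ε : ℝ)
    (hdec : ∃ (k : ℕ) (K : Fin k → Matrix (Bit × Bit) (Fin dR) ℂ),
      IsRadDecoder ψ γ ε K) :
    ∃ (k : ℕ) (S : Fin k → Matrix ((Bit × Bit) × Bit) (Bit × Fin dR) ℂ),
      IsSupDecoder ψ γ ε S := by
  obtain ⟨k, K, hK, hγ, hε⟩ := hdec
  refine ⟨_, superdenseOfRad K, hK.extB.krausComp sum_conjTranspose_bellMeas_mul_self, ?_⟩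
  have average_const (c : ℝ) : 1 / 4 * ∑ _x : Bit, ∑ _z : Bit, c = c := by
    simp only [sum_bit]
    ring
  simp only [trace_QF0_mul_applyCh_superdenseOfRad, trace_Qxz0_mul_applyCh_superdenseOfRad,
    average_const]
  exact ⟨hγ, hε⟩

/-- if there exists a `(γ,ε)`-radiation decoder against `|ψ⟩`,
then there exists a `(γ,ε)`-superdense decoder against `|ψ⟩`. -/
theorem rad_decoder_implies_superdense_decoder
    (dH dR : ℕ) (hdH : 1 ≤ dH) (hdR : 1 ≤ dR)
    (ψ : Fin dH × Bit × Fin dR → ℂ)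
    (hψ : ∑ p, Complex.normSq (ψ p) = 1)
    (γ ε : ℝ) (hγ : γ ∈ Set.Icc (0:ℝ) 1) (hε : ε ∈ Set.Icc (0:ℝ) 1)
    (hdec : ∃ (k : ℕ) (K : Fin k → Matrix (Bit × Bit) (Fin dR) ℂ),
      IsRadDecoder ψ γ ε K) :
    ∃ (k : ℕ) (S : Fin k → Matrix ((Bit × Bit) × Bit) (Bit × Fin dR) ℂ),
      IsSupDecoder ψ γ ε S :=
  rad_decoder_implies_superdense_decoder_general dH dR ψ γ ε hdec

end BHRD
end
end

section
/- Let H, R be finite-dimensional complex Hilbert spaces, B = ℂ², |ψ⟩ a unit vector in H⊗B⊗R, and η ∈ [0,1]. If there exists a (1, 1−η)-superdense decoder against |ψ⟩, then the candidate EFI pair (ρ̄₀, ρ̄₁) built from |ψ⟩ is statistically distinguishable with advantage at least (3/4)(1−η): there exists a matrix M on B⊗R⊗ℂ⁴ with 0 ≤ M ≤ I such that Tr[M(ρ̄₁ − ρ̄₀)] ≥ (3/4)(1−η). -/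
open Matrix BigOperators
open scoped ComplexOrder

noncomputable section

namespace BHRD

variable {dH dR : ℕ}

/-- The candidate EFI state `ρ̄₀ = (1/4)·Σ_{x,z} ρ^{xz} ⊗ |x,z⟩⟨x,z|` on `B ⊗ R ⊗ ℂ⁴`. -/
def rbar0 (ψ : Fin dH × Bit × Fin dR → ℂ) :
    Matrix ((Bit × Fin dR) × Bit × Bit) ((Bit × Fin dR) × Bit × Bit) ℂ :=
  (1/4 : ℂ) • ∑ x : Bit, ∑ z : Bit,
    Matrix.of fun p q =>
      (if p.2 = (x, z) ∧ q.2 = (x, z) then 1 else 0) * rhoXZ ψ x z p.1 q.1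

/-- The candidate EFI state `ρ̄₁ = ((1/4)·Σ_{x,z} ρ^{xz}) ⊗ (I₄/4)` on `B ⊗ R ⊗ ℂ⁴`. -/
def rbar1 (ψ : Fin dH × Bit × Fin dR → ℂ) :
    Matrix ((Bit × Fin dR) × Bit × Bit) ((Bit × Fin dR) × Bit × Bit) ℂ :=
  (1/16 : ℂ) • ∑ x : Bit, ∑ z : Bit,
    Matrix.of fun p q =>
      (if p.2 = q.2 then 1 else 0) * rhoXZ ψ x z p.1 q.1

end BHRD

/-!
The distinguisher runs the decoder `S` on `B ⊗ R` and accepts when `S` raises the flag `0` and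
outputs the pair stored in the classical register. On `ρ̄₀` it accepts with the decoding success
probability, at least `g (1/4 + 3ε/4)` with `ε = 1 - η`; on `ρ̄₁` the register is uniform and
independent of the decoder's output, so it accepts with probability `g/4`. Since
`Tr ρ̄₀ = Tr ρ̄₁`, the rejecting operator `M = 1 - accept` gains
`Tr[M(ρ̄₁ - ρ̄₀)] ≥ 3gε/4 ≥ 3(1-η)/4`.
-/

open scoped Kronecker

namespace BHRD

theorem sum_kronecker {ι l m n p : Type*} (s : Finset ι) (A : ι → Matrix l m ℂ)
    (B : Matrix n p ℂ) : (∑ i ∈ s, A i) ⊗ₖ B = ∑ i ∈ s, A i ⊗ₖ B := by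
  ext
  simp [Matrix.sum_apply, Finset.sum_mul]

section HeisenbergPicture

variable {α β : Type*} [Fintype α] [Fintype β] {k : ℕ}

def dualCh (K : Fin k → Matrix α β ℂ) (Q : Matrix α α ℂ) : Matrix β β ℂ :=
  ∑ i, (K i)ᴴ * Q * K i

theorem trace_dualCh_mul (K : Fin k → Matrix α β ℂ) (Q : Matrix α α ℂ) (ρ : Matrix β β ℂ) :
    (dualCh K Q * ρ).trace = (Q * applyCh K ρ).trace := by
  simp only [dualCh, applyCh, Matrix.sum_mul, Matrix.mul_sum, trace_sum]
  refine Finset.sum_congr rfl fun i _ => ?_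
  calc ((K i)ᴴ * Q * K i * ρ).trace = ((K i)ᴴ * (Q * K i * ρ)).trace := by
        simp only [Matrix.mul_assoc]
    _ = (Q * K i * ρ * (K i)ᴴ).trace := trace_mul_comm _ _
    _ = (Q * (K i * ρ * (K i)ᴴ)).trace := by simp only [Matrix.mul_assoc]

theorem posSemidef_dualCh {Q : Matrix α α ℂ} (hQ : Q.PosSemidef) (K : Fin k → Matrix α β ℂ) :
    (dualCh K Q).PosSemidef :=
  posSemidef_sum _ fun i _ => hQ.conjTranspose_mul_mul_same (K i)

theorem one_sub_dualCh [DecidableEq α] [DecidableEq β] {K : Fin k → Matrix α β ℂ}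
    (hK : IsKraus K) (Q : Matrix α α ℂ) : 1 - dualCh K Q = dualCh K (1 - Q) := by
  simp only [dualCh, Matrix.mul_sub, Matrix.sub_mul, Matrix.mul_one, Finset.sum_sub_distrib,
    hK.symm]

variable {γ : Type*} [Fintype γ] [DecidableEq γ]

theorem IsKraus.kronecker_one [DecidableEq β] {K : Fin k → Matrix α β ℂ} (hK : IsKraus K) :
    IsKraus fun i => K i ⊗ₖ (1 : Matrix γ γ ℂ) := by
  simp only [IsKraus, conjTranspose_kronecker, conjTranspose_one, ← mul_kronecker_mul,
    Matrix.mul_one, ← sum_kronecker]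
  rw [hK, one_kronecker_one]

theorem applyCh_kronecker_one (K : Fin k → Matrix α β ℂ) (ρ : Matrix β β ℂ) (D : Matrix γ γ ℂ) :
    applyCh (fun i => K i ⊗ₖ (1 : Matrix γ γ ℂ)) (ρ ⊗ₖ D) = applyCh K ρ ⊗ₖ D := by
  simp only [applyCh, conjTranspose_kronecker, conjTranspose_one, ← mul_kronecker_mul,
    Matrix.mul_one, Matrix.one_mul, sum_kronecker]

end HeisenbergPicture

theorem trace_diagonal_mul {n : Type*} [Fintype n] [DecidableEq n] (d : n → ℂ)
    (A : Matrix n n ℂ) : (diagonal d * A).trace = ∑ i, d i * A i i := by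
  simp [trace, diagonal_mul]

theorem trace_one_sub_mul_sub {n : Type*} [Fintype n] [DecidableEq n] (M ρ₀ ρ₁ : Matrix n n ℂ)
    (h : ρ₁.trace = ρ₀.trace) :
    ((1 - M) * (ρ₁ - ρ₀)).trace = (M * ρ₀).trace - (M * ρ₁).trace := by
  rw [Matrix.sub_mul, Matrix.one_mul, trace_sub, trace_sub, h, Matrix.mul_sub, trace_sub]
  ring

/-- Accepts iff the decoder raises flag `0` and outputs the pair held in the classical register. -/
def matchProj :
    Matrix (((Bit × Bit) × Bit) × (Bit × Bit)) (((Bit × Bit) × Bit) × (Bit × Bit)) ℂ :=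
  diagonal fun p => if p.1 = (p.2, 0) then 1 else 0

theorem posSemidef_matchProj : matchProj.PosSemidef := by
  rw [matchProj]
  exact posSemidef_diagonal_iff.mpr fun p => by split_ifs <;> simp

theorem posSemidef_one_sub_matchProj : (1 - matchProj).PosSemidef := by
  rw [matchProj, ← diagonal_one, diagonal_sub]
  exact posSemidef_diagonal_iff.mpr fun p => by split_ifs <;> simp

theorem trace_matchProj_mul_kronecker (σ : Matrix ((Bit × Bit) × Bit) ((Bit × Bit) × Bit) ℂ)
    (D : Matrix (Bit × Bit) (Bit × Bit) ℂ) :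
    (matchProj * (σ ⊗ₖ D)).trace = ∑ c, σ (c, 0) (c, 0) * D c c := by
  rw [matchProj, trace_diagonal_mul, Fintype.sum_prod_type_right]
  simp

theorem trace_Qxz0_mul (x z : Bit) (σ : Matrix ((Bit × Bit) × Bit) ((Bit × Bit) × Bit) ℂ) :
    (Qxz0 x z * σ).trace = σ ((x, z), 0) ((x, z), 0) := by
  have : Qxz0 x z = diagonal fun p => if p = ((x, z), 0) then 1 else 0 := by
    ext p q
    by_cases hpq : p = q
    · simp [Qxz0, diagonal, hpq]
    · simp only [Qxz0, diagonal, of_apply, hpq, if_false, ite_eq_right_iff]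
      rintro ⟨rfl, rfl⟩
      exact (hpq rfl).elim
  simp [this, trace_diagonal_mul]

theorem trace_QF0_mul (σ : Matrix ((Bit × Bit) × Bit) ((Bit × Bit) × Bit) ℂ) :
    (QF0 * σ).trace = ∑ c, σ (c, 0) (c, 0) := by
  have : QF0 = diagonal fun p => if p.2 = 0 then 1 else 0 := by
    ext p q
    by_cases hpq : p = q
    · simp [QF0, diagonal, hpq]
    · simp only [QF0, diagonal, of_apply, hpq, if_false, ite_eq_right_iff]
      rintro ⟨h1, h2, h3⟩
      exact absurd (Prod.ext h1 (h2.trans h3.symm)) hpq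
  simp [this, trace_diagonal_mul, Fintype.sum_prod_type]

section CandidatePair

variable {dH dR : ℕ} (ψ : Fin dH × Bit × Fin dR → ℂ)

theorem rbar0_eq_sum_kronecker :
    rbar0 ψ = (1/4 : ℂ) • ∑ x, ∑ z, rhoXZ ψ x z ⊗ₖ single (x, z) (x, z) 1 := by
  simp only [rbar0]
  congr! 3 with x _ z _
  ext p q
  simp [single_apply, mul_comm, eq_comm]

theorem rbar1_eq_sum_kronecker : rbar1 ψ = (1/16 : ℂ) • ∑ x, ∑ z, rhoXZ ψ x z ⊗ₖ 1 := by
  simp only [rbar1]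
  congr! 3 with x _ z _
  ext p q
  simp [one_apply, mul_comm]

theorem trace_rbar1_eq_trace_rbar0 : (rbar1 ψ).trace = (rbar0 ψ).trace := by
  simp only [rbar0_eq_sum_kronecker, rbar1_eq_sum_kronecker, trace_smul, trace_sum,
    trace_kronecker, trace_one, trace_single_eq_same]
  rw [show Fintype.card (Bit × Bit) = 4 from rfl]
  simp only [smul_eq_mul, mul_one, Nat.cast_ofNat, ← Finset.sum_mul]
  ring

end CandidatePair

section Distinguisher

variable {dR k : ℕ} (S : Fin k → Matrix ((Bit × Bit) × Bit) (Bit × Fin dR) ℂ)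

def acceptOp : Matrix ((Bit × Fin dR) × Bit × Bit) ((Bit × Fin dR) × Bit × Bit) ℂ :=
  dualCh (fun i => S i ⊗ₖ (1 : Matrix (Bit × Bit) (Bit × Bit) ℂ)) matchProj

theorem trace_acceptOp_mul_kronecker (ρ : Matrix (Bit × Fin dR) (Bit × Fin dR) ℂ)
    (D : Matrix (Bit × Bit) (Bit × Bit) ℂ) :
    (acceptOp S * (ρ ⊗ₖ D)).trace = ∑ c, applyCh S ρ (c, 0) (c, 0) * D c c := by
  rw [acceptOp, trace_dualCh_mul, applyCh_kronecker_one, trace_matchProj_mul_kronecker]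

variable {dH : ℕ} (ψ : Fin dH × Bit × Fin dR → ℂ)

theorem re_trace_acceptOp_mul_rbar0 :
    ((acceptOp S * rbar0 ψ).trace).re =
      (1/4) * ∑ x, ∑ z, ((Qxz0 x z * applyCh S (rhoXZ ψ x z)).trace).re := by
  simp only [rbar0_eq_sum_kronecker, Matrix.mul_smul, trace_smul, Matrix.mul_sum, trace_sum,
    trace_acceptOp_mul_kronecker, trace_Qxz0_mul]
  simp [single_apply]

theorem re_trace_acceptOp_mul_rbar1 :
    ((acceptOp S * rbar1 ψ).trace).re =
      (1/4) * ((1/4) * ∑ x, ∑ z, ((QF0 * applyCh S (rhoXZ ψ x z)).trace).re) := by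
  simp only [rbar1_eq_sum_kronecker, Matrix.mul_smul, trace_smul, Matrix.mul_sum, trace_sum,
    trace_acceptOp_mul_kronecker, trace_QF0_mul, one_apply_eq, mul_one, smul_eq_mul]
  norm_num [Complex.re_sum, ← mul_assoc]

end Distinguisher

theorem strong_superdense_decoder_implies_statistical_distinguisher_general
    (dH dR : ℕ)
    (ψ : Fin dH × Bit × Fin dR → ℂ)
    (η : ℝ) (hη : η ∈ Set.Icc (0:ℝ) 1)
    (hdec : ∃ (k : ℕ) (S : Fin k → Matrix ((Bit × Bit) × Bit) (Bit × Fin dR) ℂ),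
      IsSupDecoder ψ 1 (1 - η) S) :
    ∃ M : Matrix ((Bit × Fin dR) × Bit × Bit) ((Bit × Fin dR) × Bit × Bit) ℂ,
      M.PosSemidef ∧ (1 - M).PosSemidef ∧
      (3/4) * (1 - η) ≤ ((M * (rbar1 ψ - rbar0 ψ)).trace).re := by
  obtain ⟨k, S, hK, hγ, hε⟩ := hdec
  refine ⟨1 - acceptOp S, ?_, ?_, ?_⟩
  · rw [acceptOp, one_sub_dualCh hK.kronecker_one]
    exact posSemidef_dualCh posSemidef_one_sub_matchProj _
  · rw [sub_sub_cancel]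
    exact posSemidef_dualCh posSemidef_matchProj _
  · rw [trace_one_sub_mul_sub _ _ _ (trace_rbar1_eq_trace_rbar0 ψ), Complex.sub_re,
      re_trace_acceptOp_mul_rbar0, re_trace_acceptOp_mul_rbar1]
    nlinarith [mul_le_mul_of_nonneg_right hγ (sub_nonneg.2 hη.2)]

/-- a `(1, 1-η)`-superdense decoder against `|ψ⟩` yields a statistical
distinguisher with advantage at least `(3/4)(1-η)` between the candidate EFI pair
`(ρ̄₀, ρ̄₁)` built from `|ψ⟩`. -/
theorem strong_superdense_decoder_implies_statistical_distinguisher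
    (dH dR : ℕ) (hdH : 1 ≤ dH) (hdR : 1 ≤ dR)
    (ψ : Fin dH × Bit × Fin dR → ℂ)
    (hψ : ∑ p, Complex.normSq (ψ p) = 1)
    (η : ℝ) (hη : η ∈ Set.Icc (0:ℝ) 1)
    (hdec : ∃ (k : ℕ) (S : Fin k → Matrix ((Bit × Bit) × Bit) (Bit × Fin dR) ℂ),
      IsSupDecoder ψ 1 (1 - η) S) :
    ∃ M : Matrix ((Bit × Fin dR) × Bit × Bit) ((Bit × Fin dR) × Bit × Bit) ℂ,
      M.PosSemidef ∧ (1 - M).PosSemidef ∧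
      (3/4) * (1 - η) ≤ ((M * (rbar1 ψ - rbar0 ψ)).trace).re :=
  strong_superdense_decoder_implies_statistical_distinguisher_general dH dR ψ η hη hdec

end BHRD
end
end
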